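/- Let b_1, b_2 be nontrivial planar loops in PL_0(V) with spans U_1, U_2, and let u ∈ PL_0(V). If b_1 · u · b_2 · u^{-1} is a planar loop, then U_1 = U_2 = U and u ∈ PL_0(U). -/

import Mathlib

open FreeMonoid

variable (V : Type*) [AddCommGroup V] [Module ℝ V]

/-- The defining relations of `PL₀(V)`. -/
inductive PLRel : FreeMonoid V → FreeMonoid V → Prop
  | pair (v w : V) (h : ¬ LinearIndependent ℝ ![v, w]) :
      PLRel (of v * of w) (of (v + w))
  | zero : PLRel (of (0 : V)) 1

/-- The group (as a quotient monoid) `PL₀(V)` of piecewise linear paths. -/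
abbrev PL0 := (conGen (PLRel V)).Quotient

variable {V}

/-- The quotient map `FMon(V) → PL₀(V)`. -/
abbrev PLmk : FreeMonoid V →* PL0 V := (conGen (PLRel V)).mk'

/-- A minimal word: all letters nonzero, consecutive letters linearly independent. -/
def IsMinWord (l : List V) : Prop :=
  (∀ v ∈ l, v ≠ 0) ∧ l.Chain' (fun v w => LinearIndependent ℝ ![v, w])

/-- The word representing the inverse path: reverse the word and negate each letter. -/
def invWord (l : List V) : List V := l.reverse.map (fun v => -v)

/-!
Minimal words are normal forms in `PL₀(V)`: a letter acts on minimal words by `reducedCons`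
(prepending it, merging it into the first letter, or cancelling the first letter), the action
respects the defining relations, and so each class contains exactly one minimal word, `reduce l`.

Let `c` be the normal form of `u b₂ u⁻¹` and `W` the span of the planar loop `m = b₁ c`. Reducing
`b₁⁻¹ m` letter by letter shows that `c` is a `U₁`-word followed by a `W`-word. If `u` had a letter
outside `U₂`, let `x` be the last one; then `c = p x k x⁻¹ p⁻¹` with `k` a nonempty minimal loop
in `U₂`, and the splitting of `c` cuts `k` into two pieces, each lying in the intersection of `U₂`
with another plane, i.e. on a line. But a minimal word on a line has at most one letter, while a
nonempty minimal loop has at least three. Hence `u` and `c` lie in `U₂`, and the same count applied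
to `c` gives `U₁ = U₂`, unless `W = U₂`, in which case `b₁ = m c⁻¹` lies in `U₂` as well.
-/

open Module Submodule

section LinearAlgebra

lemma linearIndependent_pair_iff_notMem_span {x y : V} (hx : x ≠ 0) :
    LinearIndependent ℝ ![x, y] ↔ y ∉ ℝ ∙ x := by
  simp [LinearIndependent.pair_iff' hx, mem_span_singleton]

lemma linearIndependent_pair_of_mem_of_notMem {S : Submodule ℝ V} {a b : V} (ha : a ∈ S)
    (ha0 : a ≠ 0) (hb : b ∉ S) : LinearIndependent ℝ ![a, b] :=
  (linearIndependent_pair_iff_notMem_span ha0).2 fun hb' ↦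
    hb ((span_singleton_le_iff_mem a S).2 ha hb')

lemma not_linearIndependent_pair_of_finrank_le_one {S : Submodule ℝ V} [Module.Finite ℝ S]
    (hS : finrank ℝ S ≤ 1) {a b : V} (ha : a ∈ S) (hb : b ∈ S) :
    ¬ LinearIndependent ℝ ![a, b] := by
  intro h
  have hle : span ℝ (Set.range ![a, b]) ≤ S := by
    rw [span_le, Set.range_subset_iff]
    intro i
    fin_cases i <;> assumption
  have := Submodule.finrank_mono hle
  rw [finrank_span_eq_card h] at this
  simp at this
  omega

lemma not_linearIndependent_pair_of_mem_span_singleton {u a b : V} (ha : a ∈ ℝ ∙ u)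
    (hb : b ∈ ℝ ∙ u) : ¬ LinearIndependent ℝ ![a, b] :=
  not_linearIndependent_pair_of_finrank_le_one
    (by simpa using finrank_span_le_card (R := ℝ) ({u} : Set V)) ha hb

lemma finrank_inf_le_one_of_ne [FiniteDimensional ℝ V] {A B : Submodule ℝ V}
    (hA : finrank ℝ A = 2) (hB : finrank ℝ B ≤ 2) (hAB : A ≠ B) : finrank ℝ ↥(A ⊓ B) ≤ 1 := by
  have hlt : A ⊓ B < A := inf_le_left.lt_of_ne fun h ↦
    hAB (eq_of_le_of_finrank_le (inf_eq_left.1 h) (hB.trans hA.ge))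
  have := Submodule.finrank_lt_finrank_of_lt hlt
  omega

end LinearAlgebra

section Lists

omit [Module ℝ V]

lemma invWord_append (a b : List V) : invWord (a ++ b) = invWord b ++ invWord a := by
  simp [invWord]

lemma invWord_invWord (l : List V) : invWord (invWord l) = l := by
  simp [invWord, List.map_reverse]

lemma sum_invWord (l : List V) : (invWord l).sum = -l.sum := by
  induction l with
  | nil => simp [invWord]
  | cons v t ih =>
    rw [show v :: t = [v] ++ t from rfl, invWord_append, List.sum_append, ih]
    simp [invWord, add_comm]

lemma head?_invWord (l : List V) : (invWord l).head? = l.getLast?.map (-·) := by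
  simp [invWord, List.head?_reverse]

lemma List.exists_eq_append_cons_of_not_forall {α : Type*} {p : α → Prop} {l : List α}
    (h : ¬ ∀ x ∈ l, p x) : ∃ s x t, l = s ++ x :: t ∧ ¬ p x ∧ ∀ y ∈ t, p y := by
  induction l using List.reverseRecOn with
  | nil => simp at h
  | append_singleton l a ih =>
    by_cases ha : p a
    · obtain ⟨s, x, t, rfl, hx, ht⟩ := ih (by simpa [ha] using h)
      refine ⟨s, x, t ++ [a], by simp, hx, ?_⟩
      simp only [List.mem_append, List.mem_singleton]
      rintro y (hy | rfl)
      exacts [ht y hy, ha]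
    · exact ⟨l, a, [], rfl, ha, by simp⟩

open scoped Classical in
noncomputable def consNonzero (a : V) (l : List V) : List V := if a = 0 then l else a :: l

lemma sum_consNonzero (a : V) (l : List V) : (consNonzero a l).sum = a + l.sum := by
  unfold consNonzero
  split_ifs with h <;> simp [h]

def conjWord (a b : List V) : List V := a ++ b ++ invWord a

lemma sum_conjWord (a b : List V) : (conjWord a b).sum = b.sum := by
  simp [conjWord, sum_invWord]

end Lists

section Words

lemma isMinWord_nil : IsMinWord ([] : List V) := ⟨by simp, List.isChain_nil⟩

lemma isMinWord_append {a b : List V} :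
    IsMinWord (a ++ b) ↔ IsMinWord a ∧ IsMinWord b ∧
      ∀ x ∈ a.getLast?, ∀ y ∈ b.head?, LinearIndependent ℝ ![x, y] := by
  simp only [IsMinWord, List.mem_append, List.Chain', List.isChain_append]
  grind

lemma isMinWord_cons {a : V} {l : List V} :
    IsMinWord (a :: l) ↔ a ≠ 0 ∧ IsMinWord l ∧ ∀ y ∈ l.head?, LinearIndependent ℝ ![a, y] := by
  simp only [IsMinWord, List.mem_cons, List.Chain', List.isChain_cons]
  grind

lemma IsMinWord.ne_zero {l : List V} (hl : IsMinWord l) {v : V} (hv : v ∈ l) : v ≠ 0 :=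
  hl.1 v hv

lemma IsMinWord.invWord {l : List V} (hl : IsMinWord l) : IsMinWord (invWord l) := by
  refine ⟨fun v hv ↦ ?_, ?_⟩
  · simp only [_root_.invWord, List.mem_map, List.mem_reverse] at hv
    obtain ⟨w, hw, rfl⟩ := hv
    exact neg_ne_zero.2 (hl.1 w hw)
  rw [_root_.invWord, List.Chain', List.isChain_map, List.isChain_reverse]
  exact hl.2.imp fun a b hab ↦ by
    simpa using LinearIndependent.pair_symm_iff.1 hab

lemma forall_mem_invWord {S : Submodule ℝ V} {l : List V} (h : ∀ v ∈ l, v ∈ S) :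
    ∀ v ∈ invWord l, v ∈ S := by
  intro v hv
  simp only [invWord, List.mem_map, List.mem_reverse] at hv
  obtain ⟨w, hw, rfl⟩ := hv
  exact S.neg_mem (h w hw)

end Words

section Reduction

open scoped Classical in
noncomputable def reducedCons (v : V) : List V → List V
  | [] => consNonzero v []
  | w :: t => if LinearIndependent ℝ ![v, w] then v :: w :: t else consNonzero (v + w) t

noncomputable def reduce (l : List V) : List V := l.foldr reducedCons []

lemma forall_mem_consNonzero {S : Submodule ℝ V} {a : V} {l : List V} (ha : a ∈ S)
    (hl : ∀ w ∈ l, w ∈ S) : ∀ w ∈ consNonzero a l, w ∈ S := by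
  unfold consNonzero
  split_ifs <;> simp_all

lemma PLmk_eq_of_rel {a b : FreeMonoid V} (h : PLRel V a b) : PLmk a = PLmk b :=
  (Con.eq _).2 (ConGen.Rel.of _ _ h)

lemma PLmk_consNonzero (a : V) (l : List V) :
    PLmk (ofList (consNonzero a l)) = PLmk (of a * ofList l) := by
  unfold consNonzero
  split_ifs with h
  · rw [map_mul, h, PLmk_eq_of_rel PLRel.zero, map_one, one_mul]
  · rfl

lemma IsMinWord.exists_eq_consNonzero {x : List V} (hx : IsMinWord x) (u : V) :
    ∃ a t, x = consNonzero a t ∧ a ∈ ℝ ∙ u ∧ IsMinWord t ∧ ∀ w ∈ t.head?, w ∉ ℝ ∙ u := by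
  cases x with
  | nil => exact ⟨0, [], by simp [consNonzero], zero_mem _, isMinWord_nil, by simp⟩
  | cons a t =>
    obtain ⟨ha0, ht, hat⟩ := isMinWord_cons.1 hx
    by_cases ha : a ∈ ℝ ∙ u
    · exact ⟨a, t, by simp [consNonzero, ha0], ha, ht, fun w hw hwu ↦
        not_linearIndependent_pair_of_mem_span_singleton ha hwu (hat w hw)⟩
    · exact ⟨0, a :: t, by simp [consNonzero], zero_mem _, hx, by simpa⟩

lemma isMinWord_consNonzero {u a : V} {t : List V} (ha : a ∈ ℝ ∙ u) (ht : IsMinWord t)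
    (htu : ∀ w ∈ t.head?, w ∉ ℝ ∙ u) : IsMinWord (consNonzero a t) := by
  unfold consNonzero
  split_ifs with ha0
  · exact ht
  · exact isMinWord_cons.2
      ⟨ha0, ht, fun w hw ↦ linearIndependent_pair_of_mem_of_notMem ha ha0 (htu w hw)⟩

lemma reducedCons_consNonzero {u v a : V} {t : List V} (hv : v ≠ 0) (hvu : v ∈ ℝ ∙ u)
    (ha : a ∈ ℝ ∙ u) (htu : ∀ w ∈ t.head?, w ∉ ℝ ∙ u) :
    reducedCons v (consNonzero a t) = consNonzero (v + a) t := by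
  by_cases ha0 : a = 0
  · subst ha0
    cases t with
    | nil => simp [consNonzero, reducedCons, hv]
    | cons w t =>
      have hvw := linearIndependent_pair_of_mem_of_notMem hvu hv (htu w rfl)
      simp [consNonzero, reducedCons, hv, hvw]
  · simp [consNonzero, reducedCons, ha0, not_linearIndependent_pair_of_mem_span_singleton hvu ha]

lemma reducedCons_zero {x : List V} (hx : IsMinWord x) : reducedCons 0 x = x := by
  cases x with
  | nil => simp [reducedCons, consNonzero]
  | cons w t =>
    have h0 : ¬ LinearIndependent ℝ ![(0 : V), w] := fun h ↦ h.ne_zero 0 rfl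
    simp [reducedCons, consNonzero, h0, hx.ne_zero (List.mem_cons_self ..)]

lemma IsMinWord.reducedCons {x : List V} (hx : IsMinWord x) (v : V) :
    IsMinWord (reducedCons v x) := by
  rcases eq_or_ne v 0 with rfl | hv
  · rwa [reducedCons_zero hx]
  obtain ⟨a, t, rfl, ha, ht, htv⟩ := hx.exists_eq_consNonzero v
  rw [reducedCons_consNonzero hv (mem_span_singleton_self v) ha htv]
  exact isMinWord_consNonzero (add_mem (mem_span_singleton_self v) ha) ht htv

lemma reducedCons_reducedCons {v w : V} (h : ¬ LinearIndependent ℝ ![v, w]) {x : List V}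
    (hx : IsMinWord x) : reducedCons v (reducedCons w x) = reducedCons (v + w) x := by
  rcases eq_or_ne w 0 with rfl | hw
  · rw [reducedCons_zero hx, add_zero]
  rcases eq_or_ne v 0 with rfl | hv
  · rw [reducedCons_zero (hx.reducedCons w), zero_add]
  have hvw : v ∈ ℝ ∙ w := by
    by_contra hvw
    exact h (LinearIndependent.pair_symm_iff.2 ((linearIndependent_pair_iff_notMem_span hw).2 hvw))
  have hww := mem_span_singleton_self (R := ℝ) w
  -- Both sides add to the initial letter of `x` on the line `ℝ ∙ w` and leave the rest alone.
  obtain ⟨a, t, rfl, ha, -, htw⟩ := hx.exists_eq_consNonzero w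
  rw [reducedCons_consNonzero hw hww ha htw, reducedCons_consNonzero hv hvw (add_mem hww ha) htw]
  rcases eq_or_ne (v + w) 0 with h0 | h0
  · rw [h0, reducedCons_zero hx, ← add_assoc, h0, zero_add]
  · rw [reducedCons_consNonzero h0 (add_mem hvw hww) ha htw, add_assoc]

lemma sum_reducedCons (v : V) (x : List V) : (reducedCons v x).sum = v + x.sum := by
  cases x with
  | nil => simp [reducedCons, sum_consNonzero]
  | cons w t =>
    simp only [reducedCons]
    split_ifs <;> simp [sum_consNonzero, add_assoc]

lemma forall_mem_reducedCons {S : Submodule ℝ V} {v : V} {x : List V} (hv : v ∈ S)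
    (hx : ∀ w ∈ x, w ∈ S) : ∀ w ∈ reducedCons v x, w ∈ S := by
  cases x with
  | nil => exact forall_mem_consNonzero hv (by simp)
  | cons w t =>
    simp only [List.forall_mem_cons] at hx
    simp only [reducedCons]
    split_ifs
    · simpa [hv] using hx
    · exact forall_mem_consNonzero (add_mem hv hx.1) hx.2

lemma PLmk_reducedCons (v : V) (x : List V) :
    PLmk (ofList (reducedCons v x)) = PLmk (of v * ofList x) := by
  cases x with
  | nil => simp [reducedCons, PLmk_consNonzero]
  | cons w t =>
    simp only [reducedCons]
    split_ifs with h
    · rfl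
    · rw [PLmk_consNonzero, map_mul, ← PLmk_eq_of_rel (PLRel.pair v w h),
        ofList_cons, ← mul_assoc]
      simp only [map_mul]

lemma reduce_cons (v : V) (l : List V) : reduce (v :: l) = reducedCons v (reduce l) := rfl

lemma isMinWord_reduce (l : List V) : IsMinWord (reduce l) := by
  induction l with
  | nil => exact isMinWord_nil
  | cons v l ih => exact ih.reducedCons v

lemma sum_reduce (l : List V) : (reduce l).sum = l.sum := by
  induction l with
  | nil => rfl
  | cons v l ih => rw [reduce_cons, sum_reducedCons, ih, List.sum_cons]

lemma forall_mem_reduce {S : Submodule ℝ V} {l : List V} (hl : ∀ v ∈ l, v ∈ S) :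
    ∀ v ∈ reduce l, v ∈ S := by
  induction l with
  | nil => simp [reduce]
  | cons v l ih =>
    simp only [List.forall_mem_cons] at hl
    exact forall_mem_reducedCons hl.1 (ih hl.2)

lemma PLmk_reduce (l : List V) : PLmk (ofList (reduce l)) = PLmk (ofList l) := by
  induction l with
  | nil => rfl
  | cons v l ih => rw [reduce_cons, PLmk_reducedCons, map_mul, ih, ← map_mul, ofList_cons]

lemma reduce_eq_self {l : List V} (hl : IsMinWord l) : reduce l = l := by
  induction l with
  | nil => rfl
  | cons v l ih =>
    obtain ⟨hv, hl', hvl⟩ := isMinWord_cons.1 hl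
    rw [reduce_cons, ih hl']
    cases l with
    | nil => simp [reducedCons, consNonzero, hv]
    | cons w t => simp [reducedCons, hvl w rfl]

lemma reduce_eq_of_PLmk_eq {l₁ l₂ : List V} (h : PLmk (ofList l₁) = PLmk (ofList l₂)) :
    reduce l₁ = reduce l₂ := by
  let act : FreeMonoid V →* Function.End {x : List V // IsMinWord x} :=
    FreeMonoid.lift fun v x ↦ ⟨reducedCons v x, x.2.reducedCons v⟩
  have hle : conGen (PLRel V) ≤ Con.ker act := by
    refine Con.conGen_le.2 fun a b hab ↦ ?_
    rw [Con.ker_rel]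
    cases hab with
    | pair v w hvw => exact funext fun x ↦ Subtype.ext (reducedCons_reducedCons hvw x.2)
    | zero => exact funext fun x ↦ Subtype.ext (reducedCons_zero x.2)
  have hact : ∀ l : List V, (act (ofList l) ⟨[], isMinWord_nil⟩).1 = reduce l := by
    intro l
    induction l with
    | nil => rfl
    | cons v l ih => rw [ofList_cons, map_mul]; exact congrArg (reducedCons v) ih
  rw [← hact, ← hact, (Con.ker_rel _).1 (hle ((Con.eq _).1 h))]

end Reduction

section Conjugation

lemma PLmk_invWord_mul (l : List V) :
    PLmk (ofList (invWord l)) * PLmk (ofList l) = 1 := by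
  induction l with
  | nil => exact mul_one _
  | cons v l ih =>
    have hv : ¬ LinearIndependent ℝ ![-v, v] := fun h ↦
      not_linearIndependent_pair_of_mem_span_singleton (neg_mem (mem_span_singleton_self v))
        (mem_span_singleton_self v) h
    have hcancel : PLmk (of (-v) * of v) = 1 := by
      rw [PLmk_eq_of_rel (PLRel.pair _ _ hv), neg_add_cancel, PLmk_eq_of_rel PLRel.zero, map_one]
    calc PLmk (ofList (invWord (v :: l))) * PLmk (ofList (v :: l))
        = PLmk (ofList (invWord l)) * PLmk (of (-v) * of v) * PLmk (ofList l) := by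
          simp only [show v :: l = [v] ++ l from rfl, invWord_append,
            show invWord [v] = [-v] from rfl, ofList_append, ofList_singleton, map_mul, mul_assoc]
      _ = 1 := by rw [hcancel, mul_one, ih]

lemma PLmk_mul_invWord (l : List V) :
    PLmk (ofList l) * PLmk (ofList (invWord l)) = 1 := by
  simpa [invWord_invWord] using PLmk_invWord_mul (invWord l)

lemma PLmk_conjWord (a b : List V) : PLmk (ofList (conjWord a b)) =
    PLmk (ofList a) * PLmk (ofList b) * PLmk (ofList (invWord a)) := by
  simp only [conjWord, ofList_append, map_mul]

lemma reduce_conjWord_append (a q b : List V) :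
    reduce (conjWord (a ++ q) b) = reduce (conjWord a (reduce (conjWord q b))) := by
  apply reduce_eq_of_PLmk_eq
  simp only [PLmk_conjWord, PLmk_reduce, invWord_append, ofList_append, map_mul, mul_assoc]

lemma reduce_conjWord_ne_nil {b : List V} (hb : IsMinWord b) (hb0 : b ≠ []) (a : List V) :
    reduce (conjWord a b) ≠ [] := by
  intro h
  have h1 : PLmk (ofList (conjWord a b)) = 1 := by rw [← PLmk_reduce, h]; rfl
  have h2 : PLmk (ofList b) = 1 := by
    calc PLmk (ofList b)
        = PLmk (ofList (invWord a)) * PLmk (ofList (conjWord a b)) * PLmk (ofList a) := by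
          rw [PLmk_conjWord, ← mul_assoc, ← mul_assoc, PLmk_invWord_mul, one_mul, mul_assoc,
            PLmk_invWord_mul, mul_one]
      _ = 1 := by rw [h1, mul_one, PLmk_invWord_mul]
  have h3 := reduce_eq_of_PLmk_eq (l₂ := []) (h2.trans (map_one _).symm)
  exact hb0 (by rwa [reduce_eq_self hb] at h3)

lemma forall_mem_conjWord {S : Submodule ℝ V} {a b : List V} (ha : ∀ v ∈ a, v ∈ S)
    (hb : ∀ v ∈ b, v ∈ S) : ∀ v ∈ conjWord a b, v ∈ S := by
  simpa only [conjWord, List.forall_mem_append] using ⟨⟨ha, hb⟩, forall_mem_invWord ha⟩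

lemma isMinWord_conjWord {U : Submodule ℝ V} {a k : List V} (ha : IsMinWord a)
    (haU : ∀ x ∈ a.getLast?, x ∉ U) (hk : IsMinWord k) (hk0 : k ≠ []) (hkU : ∀ v ∈ k, v ∈ U) :
    IsMinWord (conjWord a k) := by
  refine isMinWord_append.2 ⟨isMinWord_append.2 ⟨ha, hk, fun x hx y hy ↦ ?_⟩, ha.invWord, ?_⟩
  · have hyk := List.mem_of_mem_head? hy
    exact LinearIndependent.pair_symm_iff.1
      (linearIndependent_pair_of_mem_of_notMem (hkU y hyk) (hk.ne_zero hyk) (haU x hx))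
  · rw [List.getLast?_append_of_ne_nil _ hk0, head?_invWord]
    intro y hy z hz
    obtain ⟨x, hx, rfl⟩ := Option.mem_map.1 hz
    have hyk := List.mem_of_getLast? hy
    exact linearIndependent_pair_of_mem_of_notMem (hkU y hyk) (hk.ne_zero hyk)
      fun hxU ↦ haU x hx (by simpa using neg_mem hxU)

end Conjugation

section Splitting

variable {S T : Submodule ℝ V}

def SplitsInto (S T : Submodule ℝ V) (l : List V) : Prop :=
  ∃ ι κ, l = ι ++ κ ∧ (∀ v ∈ ι, v ∈ S) ∧ ∀ v ∈ κ, v ∈ T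

lemma SplitsInto.of_forall_mem_right {l : List V} (h : ∀ v ∈ l, v ∈ T) : SplitsInto S T l :=
  ⟨[], l, rfl, by simp, h⟩

lemma SplitsInto.cons {a : V} {l : List V} (ha : a ∈ S) (h : SplitsInto S T l) :
    SplitsInto S T (a :: l) := by
  obtain ⟨ι, κ, rfl, hι, hκ⟩ := h
  exact ⟨a :: ι, κ, rfl, List.forall_mem_cons.2 ⟨ha, hι⟩, hκ⟩

lemma SplitsInto.consNonzero {a : V} {l : List V} (ha : a ∈ S) (h : SplitsInto S T l) :
    SplitsInto S T (consNonzero a l) := by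
  unfold _root_.consNonzero
  split_ifs
  exacts [h, h.cons ha]

lemma splitsInto_cons_iff {a : V} {l : List V} :
    SplitsInto S T (a :: l) ↔ (a ∈ S ∧ SplitsInto S T l) ∨ ∀ v ∈ a :: l, v ∈ T := by
  refine ⟨?_, fun h ↦ h.elim (fun h ↦ h.2.cons h.1) .of_forall_mem_right⟩
  rintro ⟨_ | ⟨i, ι⟩, κ, h, hι, hκ⟩
  · exact .inr (h ▸ hκ)
  · obtain ⟨rfl, rfl⟩ := List.cons_eq_cons.1 h
    exact .inl ⟨hι a (List.mem_cons_self ..), ι, κ, rfl,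
      fun v hv ↦ hι v (List.mem_cons_of_mem _ hv), hκ⟩

lemma SplitsInto.reducedCons {v : V} {x : List V} (hv : v ∈ S) (hx : SplitsInto S T x) :
    SplitsInto S T (reducedCons v x) := by
  cases x with
  | nil => exact (SplitsInto.of_forall_mem_right (by simp)).consNonzero hv
  | cons w t =>
    simp only [_root_.reducedCons]
    split_ifs with hvw
    · exact hx.cons hv
    rcases splitsInto_cons_iff.1 hx with ⟨hw, ht⟩ | hT
    · exact ht.consNonzero (add_mem hv hw)
    rw [List.forall_mem_cons] at hT
    rcases eq_or_ne v 0 with rfl | hv0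
    · rw [zero_add]
      exact .of_forall_mem_right (forall_mem_consNonzero hT.1 hT.2)
    · have hwv : w ∈ ℝ ∙ v := by
        by_contra hwv
        exact hvw ((linearIndependent_pair_iff_notMem_span hv0).2 hwv)
      have hwS : w ∈ S := (span_singleton_le_iff_mem v S).2 hv hwv
      exact (SplitsInto.of_forall_mem_right hT.2).consNonzero (add_mem hv hwS)

lemma splitsInto_reduce_append {a b : List V} (ha : ∀ v ∈ a, v ∈ S) (hb : ∀ v ∈ b, v ∈ T) :
    SplitsInto S T (reduce (a ++ b)) := by
  induction a with
  | nil => exact .of_forall_mem_right (forall_mem_reduce hb)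
  | cons v a ih =>
    rw [List.forall_mem_cons] at ha
    exact (ih ha.2).reducedCons ha.1

lemma splitsInto_reduce_of_PLmk_eq_mul {b c m : List V}
    (h : PLmk (ofList m) = PLmk (ofList b) * PLmk (ofList c)) :
    SplitsInto (span ℝ {v | v ∈ b}) (span ℝ {v | v ∈ m}) (reduce c) := by
  rw [reduce_eq_of_PLmk_eq (l₂ := invWord b ++ m) (by
    rw [ofList_append, map_mul, h, ← mul_assoc, PLmk_invWord_mul, one_mul])]
  exact splitsInto_reduce_append (forall_mem_invWord fun _ h ↦ subset_span h)
    fun _ h ↦ subset_span h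

lemma SplitsInto.of_append_left {l₁ l₂ : List V} (h : SplitsInto S T (l₁ ++ l₂)) :
    SplitsInto S T l₁ := by
  obtain ⟨ι, κ, h, hι, hκ⟩ := h
  rcases List.append_eq_append_iff.1 h with ⟨a, rfl, -⟩ | ⟨c, rfl, rfl⟩
  · exact ⟨l₁, [], by simp, fun v hv ↦ hι v (List.mem_append_left _ hv), by simp⟩
  · exact ⟨ι, c, rfl, hι, fun v hv ↦ hκ v (List.mem_append_left _ hv)⟩

lemma SplitsInto.of_append_right {l₁ l₂ : List V} (h : SplitsInto S T (l₁ ++ l₂)) :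
    SplitsInto S T l₂ := by
  obtain ⟨ι, κ, h, hι, hκ⟩ := h
  rcases List.append_eq_append_iff.1 h with ⟨a, rfl, rfl⟩ | ⟨c, -, rfl⟩
  · exact ⟨a, κ, rfl, fun v hv ↦ hι v (List.mem_append_right _ hv), hκ⟩
  · exact .of_forall_mem_right fun v hv ↦ hκ v (List.mem_append_right _ hv)

lemma SplitsInto.infix {l l' : List V} (h : SplitsInto S T l) (hl : l' <:+: l) :
    SplitsInto S T l' := by
  obtain ⟨s, e, rfl⟩ := hl
  exact h.of_append_left.of_append_right

lemma SplitsInto.exists_eq_append {x y : V} {k : List V} (h : SplitsInto S T (x :: (k ++ [y]))) :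
    ∃ k₁ k₂, k = k₁ ++ k₂ ∧ (∀ v ∈ k₁, v ∈ S) ∧ (∀ v ∈ k₂, v ∈ T) ∧
      (k₁ ≠ [] → x ∈ S) ∧ (k₂ ≠ [] → y ∈ T) := by
  obtain ⟨_ | ⟨i, ι⟩, κ, h, hι, hκ⟩ := h
  · rw [List.nil_append] at h
    subst h
    exact ⟨[], k, rfl, by simp, fun v hv ↦ hκ v (by simp [hv]), by simp,
      fun _ ↦ hκ y (by simp)⟩
  rw [List.cons_append, List.cons_eq_cons] at h
  obtain ⟨rfl, hk⟩ := h
  have hx := hι x (List.mem_cons_self ..)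
  rcases κ.eq_nil_or_concat' with rfl | ⟨κ, z, rfl⟩
  · rw [List.append_nil] at hk
    subst hk
    exact ⟨k, [], by simp, fun v hv ↦ hι v (by simp [hv]), by simp, fun _ ↦ hx, by simp⟩
  · rw [← List.append_assoc] at hk
    obtain ⟨rfl, hyz⟩ := List.append_inj' hk rfl
    obtain rfl := List.singleton_inj.1 hyz
    exact ⟨ι, κ, rfl, fun v hv ↦ hι v (List.mem_cons_of_mem _ hv),
      fun v hv ↦ hκ v (List.mem_append_left _ hv), fun _ ↦ hx, fun _ ↦ hκ y (by simp)⟩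

end Splitting

section PlanarLoops

lemma ne_nil_of_finrank_span_ne_zero {l : List V} (h : finrank ℝ (span ℝ {v | v ∈ l}) ≠ 0) :
    l ≠ [] := by
  rintro rfl
  rw [show {v : V | v ∈ ([] : List V)} = ∅ by simp, span_empty, finrank_bot] at h
  exact h rfl

lemma IsMinWord.length_le_one_of_finrank_le_one {S : Submodule ℝ V} [Module.Finite ℝ S]
    (hS : finrank ℝ S ≤ 1) {l : List V} (hl : IsMinWord l) (hlS : ∀ v ∈ l, v ∈ S) :
    l.length ≤ 1 := by
  match l, hl, hlS with
  | [], _, _ | [_], _, _ => simp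
  | a :: b :: _, hl, hlS =>
    exact absurd ((isMinWord_cons.1 hl).2.2 b rfl)
      (not_linearIndependent_pair_of_finrank_le_one hS (hlS a (by simp)) (hlS b (by simp)))

lemma IsMinWord.eq_nil_of_length_le_two {l : List V} (hl : IsMinWord l) (hsum : l.sum = 0)
    (hlen : l.length ≤ 2) : l = [] := by
  match l, hl, hsum, hlen with
  | [], _, _, _ => rfl
  | [a], hl, hsum, _ => exact absurd (by simpa using hsum) (hl.ne_zero (List.mem_singleton_self a))
  | [a, b], hl, hsum, _ =>
    have hb : b = -a := eq_neg_of_add_eq_zero_right (by simpa using hsum)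
    refine absurd ((isMinWord_cons.1 hl).2.2 b rfl) ?_
    rw [hb]
    exact not_linearIndependent_pair_of_mem_span_singleton (mem_span_singleton_self a)
      (neg_mem (mem_span_singleton_self a))

variable [FiniteDimensional ℝ V]

lemma IsMinWord.length_le_one_of_forall_mem {U A : Submodule ℝ V} (hU : finrank ℝ U = 2)
    (hA : finrank ℝ A ≤ 2) {k : List V} (hk : IsMinWord k) (hkU : ∀ v ∈ k, v ∈ U)
    (hkA : ∀ v ∈ k, v ∈ A) (hUA : k ≠ [] → U ≠ A) : k.length ≤ 1 := by
  by_cases hk0 : k = []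
  · simp [hk0]
  exact hk.length_le_one_of_finrank_le_one (finrank_inf_le_one_of_ne hU hA (hUA hk0))
    fun v hv ↦ ⟨hkU v hv, hkA v hv⟩

lemma IsMinWord.eq_nil_of_eq_append {U S T : Submodule ℝ V} (hU : finrank ℝ U = 2)
    (hS : finrank ℝ S ≤ 2) (hT : finrank ℝ T ≤ 2) {l l₁ l₂ : List V} (hl : IsMinWord l)
    (hsum : l.sum = 0) (hlU : ∀ v ∈ l, v ∈ U) (hl₁₂ : l = l₁ ++ l₂) (hl₁ : ∀ v ∈ l₁, v ∈ S)
    (hl₂ : ∀ v ∈ l₂, v ∈ T) (hUS : l₁ ≠ [] → U ≠ S) (hUT : l₂ ≠ [] → U ≠ T) : l = [] := by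
  subst hl₁₂
  obtain ⟨hmin₁, hmin₂, -⟩ := isMinWord_append.1 hl
  rw [List.forall_mem_append] at hlU
  have h₁ := hmin₁.length_le_one_of_forall_mem hU hS hlU.1 hl₁ hUS
  have h₂ := hmin₂.length_le_one_of_forall_mem hU hT hlU.2 hl₂ hUT
  exact hl.eq_nil_of_length_le_two hsum (by rw [List.length_append]; omega)

lemma forall_mem_of_splitsInto_reduce_conjWord {S T U : Submodule ℝ V}
    (hS : finrank ℝ S ≤ 2) (hT : finrank ℝ T ≤ 2) (hU : finrank ℝ U = 2) {b u : List V}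
    (hb : IsMinWord b) (hb0 : b ≠ []) (hbsum : b.sum = 0) (hbU : ∀ v ∈ b, v ∈ U)
    (hu : IsMinWord u) (h : SplitsInto S T (reduce (conjWord u b))) : ∀ v ∈ u, v ∈ U := by
  by_contra hu'
  obtain ⟨p, x, q, rfl, hx, hq⟩ := List.exists_eq_append_cons_of_not_forall hu'
  rw [show p ++ x :: q = p ++ [x] ++ q by simp] at hu h
  set k := reduce (conjWord q b)
  have hk := isMinWord_reduce (conjWord q b)
  have hk0 : k ≠ [] := reduce_conjWord_ne_nil hb hb0 q
  have hkU : ∀ v ∈ k, v ∈ U := forall_mem_reduce (forall_mem_conjWord hq hbU)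
  have hpx := (isMinWord_append.1 hu).1
  rw [reduce_conjWord_append,
    reduce_eq_self (isMinWord_conjWord hpx (by simpa using hx) hk hk0 hkU)] at h
  have hinfix : x :: (k ++ [-x]) <:+: conjWord (p ++ [x]) k :=
    ⟨p, invWord p, by simp [conjWord, invWord]⟩
  obtain ⟨k₁, k₂, hk₁₂, hk₁, hk₂, hxS, hxT⟩ := (h.infix hinfix).exists_eq_append
  refine hk0 (hk.eq_nil_of_eq_append hU hS hT (by rw [sum_reduce, sum_conjWord, hbsum]) hkU
    hk₁₂ hk₁ hk₂ (fun hne hUS ↦ hx (hUS ▸ hxS hne)) (fun hne hUT ↦ hx ?_))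
  simpa using neg_mem (show -x ∈ U from hUT ▸ hxT hne)

lemma span_eq_of_PLmk_eq_mul {U : Submodule ℝ V} {b c m : List V} (hb : IsMinWord b)
    (hb2 : finrank ℝ (span ℝ {v | v ∈ b}) = 2) (hU : finrank ℝ U = 2)
    (hm2 : finrank ℝ (span ℝ {v | v ∈ m}) ≤ 2) (hc : IsMinWord c) (hc0 : c ≠ [])
    (hcsum : c.sum = 0) (hcU : ∀ v ∈ c, v ∈ U)
    (h : PLmk (ofList m) = PLmk (ofList b) * PLmk (ofList c)) : span ℝ {v | v ∈ b} = U := by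
  by_cases hmU : span ℝ {v | v ∈ m} = U
  · have hb' : b = reduce (m ++ invWord c) := by
      rw [← reduce_eq_self hb]
      refine reduce_eq_of_PLmk_eq ?_
      rw [ofList_append, map_mul, h, mul_assoc, PLmk_mul_invWord, mul_one]
    have hmcU : ∀ v ∈ m ++ invWord c, v ∈ U :=
      List.forall_mem_append.2 ⟨fun _ h ↦ hmU ▸ subset_span h, forall_mem_invWord hcU⟩
    refine eq_of_le_of_finrank_eq (span_le.2 fun v hv ↦ ?_) (hb2.trans hU.symm)
    exact forall_mem_reduce hmcU v (hb' ▸ hv)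
  · by_contra hbU
    obtain ⟨ι, κ, hικ, hι, hκ⟩ := reduce_eq_self hc ▸ splitsInto_reduce_of_PLmk_eq_mul h
    exact hc0 (hc.eq_nil_of_eq_append hU hb2.le hm2 hcsum hcU hικ hι hκ
      (fun _ ↦ Ne.symm hbU) (fun _ ↦ Ne.symm hmU))

end PlanarLoops

theorem composition_of_kites_general [FiniteDimensional ℝ V]
    (lb₁ lb₂ lu : List V)
    (h₁min : IsMinWord lb₁)
    (h₁2 : Module.finrank ℝ (Submodule.span ℝ {v | v ∈ lb₁}) = 2)
    (h₂min : IsMinWord lb₂) (h₂sum : lb₂.sum = 0)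
    (h₂2 : Module.finrank ℝ (Submodule.span ℝ {v | v ∈ lb₂}) = 2)
    (humin : IsMinWord lu)
    -- `b₁ · u · b₂ · u⁻¹` is a planar loop:
    (hprod : ∃ m : List V, IsMinWord m ∧ m.sum = 0 ∧
        Module.finrank ℝ (Submodule.span ℝ {v | v ∈ m}) ≤ 2 ∧
        PLmk (FreeMonoid.ofList m) =
          PLmk (FreeMonoid.ofList (lb₁ ++ lu ++ lb₂ ++ invWord lu))) :
    Submodule.span ℝ {v | v ∈ lb₁} = Submodule.span ℝ {v | v ∈ lb₂} ∧
    ∀ v ∈ lu, v ∈ Submodule.span ℝ {u | u ∈ lb₁} := by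
  obtain ⟨m, -, -, hm2, hmeq⟩ := hprod
  have hb₂0 : lb₂ ≠ [] := ne_nil_of_finrank_span_ne_zero (by omega)
  have hmeq' : PLmk (ofList m) = PLmk (ofList lb₁) * PLmk (ofList (conjWord lu lb₂)) := by
    simp only [hmeq, conjWord, ofList_append, map_mul, mul_assoc]
  have hu := forall_mem_of_splitsInto_reduce_conjWord h₁2.le hm2 h₂2 h₂min hb₂0 h₂sum
    (fun _ h ↦ subset_span h) humin (splitsInto_reduce_of_PLmk_eq_mul hmeq')
  have hU := span_eq_of_PLmk_eq_mul h₁min h₁2 h₂2 hm2 (isMinWord_reduce _)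
    (reduce_conjWord_ne_nil h₂min hb₂0 lu) (by rw [sum_reduce, sum_conjWord, h₂sum])
    (forall_mem_reduce (forall_mem_conjWord hu fun _ h ↦ subset_span h))
    (by rwa [PLmk_reduce])
  exact ⟨hU, hU ▸ hu⟩

theorem composition_of_kites [FiniteDimensional ℝ V]
    (lb₁ lb₂ lu : List V)
    (h₁min : IsMinWord lb₁) (h₁sum : lb₁.sum = 0)
    (h₁2 : Module.finrank ℝ (Submodule.span ℝ {v | v ∈ lb₁}) = 2)
    (h₂min : IsMinWord lb₂) (h₂sum : lb₂.sum = 0)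
    (h₂2 : Module.finrank ℝ (Submodule.span ℝ {v | v ∈ lb₂}) = 2)
    (humin : IsMinWord lu)
    -- `b₁ · u · b₂ · u⁻¹` is a planar loop:
    (hprod : ∃ m : List V, IsMinWord m ∧ m.sum = 0 ∧
        Module.finrank ℝ (Submodule.span ℝ {v | v ∈ m}) ≤ 2 ∧
        PLmk (FreeMonoid.ofList m) =
          PLmk (FreeMonoid.ofList (lb₁ ++ lu ++ lb₂ ++ invWord lu))) :
    Submodule.span ℝ {v | v ∈ lb₁} = Submodule.span ℝ {v | v ∈ lb₂} ∧
    ∀ v ∈ lu, v ∈ Submodule.span ℝ {u | u ∈ lb₁} :=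
  composition_of_kites_general lb₁ lb₂ lu h₁min h₁2 h₂min h₂sum h₂2 humin hprod
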